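/- arXiv:math/0605155 — 8 statements merged into one kernel-verified Lean document; each statement's English description precedes it below -/
import Mathlib

section
/- Let K be a Lie algebra over ℂ and let Γ be a group acting on K by Lie algebra automorphisms such that for any u, v ∈ K, [g·u, v] = 0 for all but finitely many g ∈ Γ. Define a new bilinear operation [u,v]_Γ = Σ_{g∈Γ} [g·u, v]. Then the subspace I spanned by the vectors g·u − u (for g ∈ Γ, u ∈ K) satisfies [I, K]_Γ ⊆ I; in fact [g·u − u, v]_Γ = 0 for all g ∈ Γ and u, v ∈ K. -/
/-- For a Lie algebra `K` over `ℂ` with a group `Γ` acting by Lie algebra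
automorphisms with the finiteness condition, the averaged bracket
`[u,v]_Γ = ∑ᶠ g, ⁅σ g u, v⁆` kills the generators `σ g u - u` of the spanned subspace. -/
theorem averaged_bracket_vanishes_on_coinvariant_generators
    {K : Type*} [LieRing K] [LieAlgebra ℂ K]
    {Γ : Type*} [Group Γ] (σ : Γ → K →ₗ[ℂ] K)
    (hone : σ 1 = LinearMap.id)
    (hmul : ∀ g h : Γ, σ (g * h) = (σ g).comp (σ h))
    (hbr : ∀ (g : Γ) (u v : K), σ g ⁅u, v⁆ = ⁅σ g u, σ g v⁆)
    (hfin : ∀ u v : K, {g : Γ | ⁅σ g u, v⁆ ≠ 0}.Finite) :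
    ∀ (g : Γ) (u v : K), (∑ᶠ h : Γ, ⁅σ h (σ g u - u), v⁆) = 0 := by
  intro g u v
  have key : ∀ h : Γ, ⁅σ h (σ g u - u), v⁆ = ⁅σ (h * g) u, v⁆ - ⁅σ h u, v⁆ := by
    intro h
    rw [map_sub, sub_lie, hmul]
    rfl
  have hf1 : (Function.support fun h : Γ => ⁅σ (h * g) u, v⁆).Finite := by
    have := (hfin u v).preimage (f := fun h : Γ => h * g)
      (Set.injOn_of_injective (mul_left_injective g))
    simpa [Function.support, Set.preimage] using this
  have hf2 : (Function.support fun h : Γ => ⁅σ h u, v⁆).Finite := by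
    simpa [Function.support] using hfin u v
  calc (∑ᶠ h : Γ, ⁅σ h (σ g u - u), v⁆)
      = ∑ᶠ h : Γ, (⁅σ (h * g) u, v⁆ - ⁅σ h u, v⁆) := by
        exact finsum_congr key
    _ = (∑ᶠ h : Γ, ⁅σ (h * g) u, v⁆) - ∑ᶠ h : Γ, ⁅σ h u, v⁆ :=
        finsum_sub_distrib hf1 hf2
    _ = 0 := by
        rw [finsum_comp (g := fun h : Γ => ⁅σ h u, v⁆) (fun h : Γ => h * g)
          (Group.mulRight_bijective g), sub_self]
end

section
/- Let K be a Lie algebra over ℂ and Γ a group acting on K by automorphisms with the finiteness condition that for any u, v ∈ K, [g·u, v] = 0 for all but finitely many g ∈ Γ. Then the operation [u,v]_Γ = Σ_{g∈Γ} [g·u, v] satisfies the Jacobi-type identity [u, [v,w]_Γ]_Γ − [v, [u,w]_Γ]_Γ − [[u,v]_Γ, w]_Γ = 0 for all u, v, w ∈ K. -/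
/-- The averaged bracket `[u,v]_Γ = ∑ᶠ g, ⁅σ g u, v⁆` satisfies the
Jacobi-type identity `[u,[v,w]_Γ]_Γ − [v,[u,w]_Γ]_Γ − [[u,v]_Γ,w]_Γ = 0`. -/
theorem averaged_bracket_jacobi
    {K : Type*} [LieRing K] [LieAlgebra ℂ K]
    {Γ : Type*} [Group Γ] (σ : Γ → K →ₗ[ℂ] K)
    (hone : σ 1 = LinearMap.id)
    (hmul : ∀ g h : Γ, σ (g * h) = (σ g).comp (σ h))
    (hbr : ∀ (g : Γ) (u v : K), σ g ⁅u, v⁆ = ⁅σ g u, σ g v⁆)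
    (hfin : ∀ u v : K, {g : Γ | ⁅σ g u, v⁆ ≠ 0}.Finite) :
    ∀ u v w : K,
      (∑ᶠ g : Γ, ⁅σ g u, ∑ᶠ h : Γ, ⁅σ h v, w⁆⁆)
        - (∑ᶠ g : Γ, ⁅σ g v, ∑ᶠ h : Γ, ⁅σ h u, w⁆⁆)
        - (∑ᶠ g : Γ, ⁅σ g (∑ᶠ h : Γ, ⁅σ h u, v⁆), w⁆) = 0 := by
  intro u v w
  -- supports
  have hsupp : ∀ a b : K, (Function.support (fun g : Γ => ⁅σ g a, b⁆)).Finite := by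
    intro a b; exact hfin a b
  -- the "averaging with u" additive map
  have Ladd : ∀ x y : K, (∑ᶠ h : Γ, ⁅σ h u, x + y⁆)
      = (∑ᶠ h : Γ, ⁅σ h u, x⁆) + (∑ᶠ h : Γ, ⁅σ h u, y⁆) := by
    intro x y
    rw [← finsum_add_distrib (hsupp u x) (hsupp u y)]
    exact finsum_congr fun h => lie_add _ _ _
  set L : K →+ K :=
    { toFun := fun x => ∑ᶠ h : Γ, ⁅σ h u, x⁆
      map_zero' := by simp
      map_add' := Ladd } with hL
  have hLdef : ∀ x : K, L x = ∑ᶠ h : Γ, ⁅σ h u, x⁆ := fun _ => rfl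
  set P : K := ∑ᶠ h : Γ, ⁅σ h v, w⁆ with hP
  set Q : K := ∑ᶠ h : Γ, ⁅σ h u, w⁆ with hQ
  set R : K := ∑ᶠ h : Γ, ⁅σ h u, v⁆ with hR
  -- Term1 = ∑ᶠ g, L ⁅σ g v, w⁆
  have hT1 : (∑ᶠ g : Γ, ⁅σ g u, P⁆) = ∑ᶠ g : Γ, L ⁅σ g v, w⁆ := by
    have := L.map_finsum (f := fun h : Γ => ⁅σ h v, w⁆) (hsupp v w)
    simpa [hLdef, hP] using this.symm ▸ (hLdef P)
  -- key pointwise identity for Term3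
  have hT3g : ∀ g : Γ, ⁅σ g R, w⁆ = L ⁅σ g v, w⁆ - ⁅σ g v, Q⁆ := by
    intro g
    have h1 : σ g R = ∑ᶠ h : Γ, ⁅σ h u, σ g v⁆ := by
      have e1 : σ g R = ∑ᶠ h : Γ, σ g ⁅σ h u, v⁆ :=
        (σ g).toAddMonoidHom.map_finsum (hsupp u v)
      have e2 : ∀ h : Γ, σ g ⁅σ h u, v⁆ = ⁅σ (g * h) u, σ g v⁆ := by
        intro h
        rw [hbr, hmul]; rfl
      rw [e1, finsum_congr e2]
      exact finsum_comp (g := fun h : Γ => ⁅σ h u, σ g v⁆) (fun h : Γ => g * h)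
        (Equiv.mulLeft g).bijective
    have h2 : ⁅σ g R, w⁆ = ∑ᶠ h : Γ, ⁅⁅σ h u, σ g v⁆, w⁆ := by
      rw [h1]
      exact AddMonoidHom.map_finsum
        (AddMonoidHom.mk' (fun x : K => ⁅x, w⁆) (fun a b => add_lie a b w))
        (hsupp u (σ g v))
    rw [h2]
    have h3 : ∀ h : Γ, ⁅⁅σ h u, σ g v⁆, w⁆
        = ⁅σ h u, ⁅σ g v, w⁆⁆ - ⁅σ g v, ⁅σ h u, w⁆⁆ := by
      intro h; rw [lie_lie]
    rw [finsum_congr h3]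
    have hf1 : (Function.support (fun h : Γ => ⁅σ h u, ⁅σ g v, w⁆⁆)).Finite :=
      hsupp u ⁅σ g v, w⁆
    have hf2 : (Function.support (fun h : Γ => ⁅σ g v, ⁅σ h u, w⁆⁆)).Finite := by
      apply (hsupp u w).subset
      intro h hh
      simp only [Function.mem_support] at hh ⊢
      intro h0
      exact hh (by rw [h0, lie_zero])
    rw [finsum_sub_distrib hf1 hf2, hLdef]
    congr 1
    have := AddMonoidHom.map_finsum
      (AddMonoidHom.mk' (fun x : K => ⁅σ g v, x⁆) (fun a b => lie_add (σ g v) a b))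
      (hsupp u w)
    simpa [hQ] using this.symm
  -- Term3 = ∑ᶠ g, L ⁅σ g v, w⁆ - Term2
  have hT3 : (∑ᶠ g : Γ, ⁅σ g R, w⁆)
      = (∑ᶠ g : Γ, L ⁅σ g v, w⁆) - ∑ᶠ g : Γ, ⁅σ g v, Q⁆ := by
    rw [finsum_congr hT3g]
    apply finsum_sub_distrib
    · apply (hsupp v w).subset
      intro g hg
      simp only [Function.mem_support] at hg ⊢
      intro h0
      exact hg (by rw [hLdef, h0]; simp)
    · exact hsupp v Q
  rw [hT1, hT3]
  abel
end

section
/- Let K be a Lie algebra over ℂ and Γ a group acting on K by automorphisms with the finiteness condition as above. Then for u, v ∈ K, [u,v]_Γ + [v,u]_Γ = Σ_{g∈Γ} ([g·u, v] − g⁻¹·[g·u, v]). In particular, [u,v]_Γ + [v,u]_Γ lies in the subspace spanned by the vectors h·w − w (h ∈ Γ, w ∈ K), so the induced bracket on the quotient K/span{g·u − u} is antisymmetric. -/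
/-- `[u,v]_Γ + [v,u]_Γ = ∑ᶠ g, ([g·u,v] − g⁻¹·[g·u,v])`, and in particular
this sum lies in the span of the vectors `h·w − w`, so the induced bracket on the
quotient is antisymmetric. -/
theorem averaged_bracket_antisymmetric_mod_coinvariants
    {K : Type*} [LieRing K] [LieAlgebra ℂ K]
    {Γ : Type*} [Group Γ] (σ : Γ → K →ₗ[ℂ] K)
    (hone : σ 1 = LinearMap.id)
    (hmul : ∀ g h : Γ, σ (g * h) = (σ g).comp (σ h))
    (hbr : ∀ (g : Γ) (u v : K), σ g ⁅u, v⁆ = ⁅σ g u, σ g v⁆)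
    (hfin : ∀ u v : K, {g : Γ | ⁅σ g u, v⁆ ≠ 0}.Finite) :
    ∀ u v : K,
      (∑ᶠ g : Γ, ⁅σ g u, v⁆) + (∑ᶠ g : Γ, ⁅σ g v, u⁆)
          = (∑ᶠ g : Γ, (⁅σ g u, v⁆ - σ g⁻¹ ⁅σ g u, v⁆)) ∧
      (∑ᶠ g : Γ, ⁅σ g u, v⁆) + (∑ᶠ g : Γ, ⁅σ g v, u⁆)
          ∈ Submodule.span ℂ {x : K | ∃ (h : Γ) (w : K), x = σ h w - w} := by
  intro u v
  have hinv : ∀ (g : Γ) (x : K), σ g⁻¹ (σ g x) = x := by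
    intro g x
    have := hmul g⁻¹ g
    rw [inv_mul_cancel, hone] at this
    calc σ g⁻¹ (σ g x) = ((σ g⁻¹).comp (σ g)) x := rfl
      _ = x := by rw [← this]; rfl
  -- rewrite σ g⁻¹ ⁅σ g u, v⁆ as -⁅σ g⁻¹ v, u⁆
  have hterm : ∀ g : Γ, σ g⁻¹ ⁅σ g u, v⁆ = -⁅σ g⁻¹ v, u⁆ := by
    intro g
    rw [hbr, hinv, ← lie_skew]
  -- supports
  have hs1 : (Function.support fun g : Γ => ⁅σ g u, v⁆).Finite := by
    simpa [Function.support] using hfin u v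
  have hs2 : (Function.support fun g : Γ => σ g⁻¹ ⁅σ g u, v⁆).Finite := by
    apply hs1.subset
    intro g hg
    simp only [Function.mem_support] at hg ⊢
    intro h
    apply hg
    rw [h, map_zero]
  have hsplit : (∑ᶠ g : Γ, (⁅σ g u, v⁆ - σ g⁻¹ ⁅σ g u, v⁆))
      = (∑ᶠ g : Γ, ⁅σ g u, v⁆) - ∑ᶠ g : Γ, σ g⁻¹ ⁅σ g u, v⁆ :=
    finsum_sub_distrib hs1 hs2
  have hre : (∑ᶠ g : Γ, σ g⁻¹ ⁅σ g u, v⁆) = -∑ᶠ g : Γ, ⁅σ g v, u⁆ := by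
    calc (∑ᶠ g : Γ, σ g⁻¹ ⁅σ g u, v⁆) = ∑ᶠ g : Γ, -⁅σ g⁻¹ v, u⁆ := by
          exact finsum_congr hterm
      _ = -∑ᶠ g : Γ, ⁅σ g⁻¹ v, u⁆ := finsum_neg_distrib _
      _ = -∑ᶠ g : Γ, ⁅σ g v, u⁆ := by
          congr 1
          exact finsum_comp_equiv (Equiv.inv Γ) (f := fun g => ⁅σ g v, u⁆)
  have heq : (∑ᶠ g : Γ, ⁅σ g u, v⁆) + (∑ᶠ g : Γ, ⁅σ g v, u⁆)
      = ∑ᶠ g : Γ, (⁅σ g u, v⁆ - σ g⁻¹ ⁅σ g u, v⁆) := by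
    rw [hsplit, hre, sub_neg_eq_add]
  refine ⟨heq, ?_⟩
  rw [heq]
  have hsub : (Function.support fun g : Γ => ⁅σ g u, v⁆ - σ g⁻¹ ⁅σ g u, v⁆)
      ⊆ (hfin u v).toFinset := by
    intro g hg
    simp only [Function.mem_support] at hg
    simp only [Finset.mem_coe, Set.Finite.mem_toFinset, Set.mem_setOf_eq]
    intro h
    apply hg
    rw [h, map_zero, sub_zero]
  rw [finsum_eq_sum_of_support_subset _ hsub]
  apply Submodule.sum_mem
  intro g _
  have : ⁅σ g u, v⁆ - σ g⁻¹ ⁅σ g u, v⁆ = -(σ g⁻¹ ⁅σ g u, v⁆ - ⁅σ g u, v⁆) := by abel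
  rw [this]
  exact Submodule.neg_mem _ (Submodule.subset_span ⟨g⁻¹, ⁅σ g u, v⁆, rfl⟩)
end

section
/- Let Γ be a finite group acting on a Lie algebra K by automorphisms. Let K^Γ denote the Lie subalgebra of fixed points, and let K/Γ denote the quotient of K by the subspace spanned by g·u − u (g ∈ Γ, u ∈ K), equipped with the bracket induced by [u,v]_Γ = Σ_{g∈Γ}[g·u,v]. Then the map ψ: K → K^Γ defined by ψ(u) = Σ_{g∈Γ} g·u induces a Lie algebra isomorphism from K/Γ onto K^Γ. -/
/-!
Left and right translation by `g` permute the terms of `ψ u = ∑ g, g • u`, so `ψ` lands in the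
fixed points and kills every `g • w - w`. Dividing by `|Γ|` inverts `ψ` on the fixed points, and
writes any `u` with `ψ u = 0` as the average of the differences `u - g • u`. For the bracket,
`∑ h, ⁅h • u, v⁆ = ⁅ψ u, v⁆`, and applying `g` to it gives `⁅ψ u, g • v⁆` since `g` fixes `ψ u`.
-/

open Finset

section Averaging

variable {R M Γ : Type*} [Fintype Γ]

section Semiring

variable [Semiring R] [AddCommMonoid M] [Module R M]

def averaging (σ : Γ → M →ₗ[R] M) : M →ₗ[R] M :=
  ∑ g, σ g

variable {σ : Γ → M →ₗ[R] M}

@[simp]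
theorem averaging_apply (u : M) : averaging σ u = ∑ g, σ g u :=
  LinearMap.sum_apply _ _ _

theorem averaging_apply_of_forall_apply_eq {y : M} (hy : ∀ g, σ g y = y) :
    averaging σ y = Fintype.card Γ • y := by
  simp [hy]

variable [Group Γ]

theorem apply_averaging (hmul : ∀ g h, σ (g * h) = σ g ∘ₗ σ h) (g : Γ) (u : M) :
    σ g (averaging σ u) = averaging σ u := by
  simp only [averaging_apply, map_sum, ← LinearMap.comp_apply, ← hmul]
  exact Equiv.sum_comp (Equiv.mulLeft g) (σ · u)

theorem averaging_apply_apply (hmul : ∀ g h, σ (g * h) = σ g ∘ₗ σ h) (h : Γ) (w : M) :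
    averaging σ (σ h w) = averaging σ w := by
  rw [averaging_apply, averaging_apply]
  simp only [← LinearMap.comp_apply, ← hmul]
  exact Equiv.sum_comp (Equiv.mulRight h) (σ · w)

end Semiring

section DivisionRing

variable [DivisionRing R] [AddCommGroup M] [Module R M] {σ : Γ → M →ₗ[R] M}

theorem exists_averaging_apply_eq (hcard : (Fintype.card Γ : R) ≠ 0) {y : M}
    (hy : ∀ g, σ g y = y) : ∃ u, averaging σ u = y :=
  ⟨(Fintype.card Γ : R)⁻¹ • y, by
    rw [map_smul, averaging_apply_of_forall_apply_eq hy, ← Nat.cast_smul_eq_nsmul R, smul_smul,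
      inv_mul_cancel₀ hcard, one_smul]⟩

variable [Group Γ]

theorem averaging_apply_eq_zero_iff (hmul : ∀ g h, σ (g * h) = σ g ∘ₗ σ h)
    (hcard : (Fintype.card Γ : R) ≠ 0) (u : M) :
    averaging σ u = 0 ↔ u ∈ Submodule.span R {x | ∃ h w, x = σ h w - w} := by
  constructor
  · intro hu
    have hu_eq : u = (Fintype.card Γ : R)⁻¹ • ∑ g, -(σ g u - u) := by
      simp_rw [neg_sub, sum_sub_distrib, ← averaging_apply, hu, sub_zero, sum_const, card_univ,
        ← Nat.cast_smul_eq_nsmul R, smul_smul, inv_mul_cancel₀ hcard, one_smul]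
    rw [hu_eq]
    exact Submodule.smul_mem _ _ <| Submodule.sum_mem _ fun g _ =>
      Submodule.neg_mem _ <| Submodule.subset_span ⟨g, u, rfl⟩
  · intro hu
    induction hu using Submodule.span_induction with
    | mem x hx =>
      obtain ⟨h, w, rfl⟩ := hx
      rw [map_sub, averaging_apply_apply hmul, sub_self]
    | zero => exact map_zero _
    | add x y _ _ hx hy => rw [map_add, hx, hy, add_zero]
    | smul c x _ hx => rw [map_smul, hx, smul_zero]

end DivisionRing

theorem averaging_apply_sum_lie {K : Type*} [Group Γ] [CommRing R] [LieRing K] [LieAlgebra R K]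
    {σ : Γ → K →ₗ[R] K} (hmul : ∀ g h, σ (g * h) = σ g ∘ₗ σ h)
    (hbr : ∀ g (u v : K), σ g ⁅u, v⁆ = ⁅σ g u, σ g v⁆) (u v : K) :
    averaging σ (∑ h, ⁅σ h u, v⁆) = ⁅averaging σ u, averaging σ v⁆ := by
  rw [← sum_lie, ← averaging_apply, averaging_apply ⁅_, _⁆, averaging_apply v, lie_sum]
  simp only [hbr, apply_averaging hmul]

end Averaging

theorem averaging_map_induces_iso_coinvariants_to_invariants_general
    {K : Type*} [LieRing K] [LieAlgebra ℂ K]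
    {Γ : Type*} [Group Γ] [Fintype Γ] (σ : Γ → K →ₗ[ℂ] K)
    (hmul : ∀ g h : Γ, σ (g * h) = (σ g).comp (σ h))
    (hbr : ∀ (g : Γ) (u v : K), σ g ⁅u, v⁆ = ⁅σ g u, σ g v⁆) :
    (∀ (u : K) (g : Γ), σ g (∑ g' : Γ, σ g' u) = ∑ g' : Γ, σ g' u) ∧
    (∀ y : K, (∀ g : Γ, σ g y = y) → ∃ u : K, (∑ g : Γ, σ g u) = y) ∧
    (∀ u : K, (∑ g : Γ, σ g u) = 0 ↔
      u ∈ Submodule.span ℂ {x : K | ∃ (h : Γ) (w : K), x = σ h w - w}) ∧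
    (∀ u v : K, (∑ g : Γ, σ g (∑ h : Γ, ⁅σ h u, v⁆))
      = ⁅∑ g : Γ, σ g u, ∑ g : Γ, σ g v⁆) := by
  have hcard : (Fintype.card Γ : ℂ) ≠ 0 := Nat.cast_ne_zero.mpr Fintype.card_ne_zero
  simp only [← averaging_apply]
  exact ⟨fun u g => apply_averaging hmul g u, fun y => exists_averaging_apply_eq hcard,
    averaging_apply_eq_zero_iff hmul hcard, averaging_apply_sum_lie hmul hbr⟩

/-- For a finite group `Γ` acting on a Lie algebra `K` by automorphisms,
the averaging map `ψ(u) = ∑_{g∈Γ} g·u` induces a Lie algebra isomorphism from the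
coinvariants `K/Γ` (quotient of `K` by `span{g·u − u}` with the bracket induced by
`[u,v]_Γ = ∑_{g∈Γ}[g·u,v]`) onto the fixed-point subalgebra `K^Γ`: it lands in the
fixed points, is onto the fixed points, its kernel is exactly `span{g·u − u}`, and
it intertwines the averaged bracket with the Lie bracket. -/
theorem averaging_map_induces_iso_coinvariants_to_invariants
    {K : Type*} [LieRing K] [LieAlgebra ℂ K]
    {Γ : Type*} [Group Γ] [Fintype Γ] (σ : Γ → K →ₗ[ℂ] K)
    (hone : σ 1 = LinearMap.id)
    (hmul : ∀ g h : Γ, σ (g * h) = (σ g).comp (σ h))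
    (hbr : ∀ (g : Γ) (u v : K), σ g ⁅u, v⁆ = ⁅σ g u, σ g v⁆) :
    (∀ (u : K) (g : Γ), σ g (∑ g' : Γ, σ g' u) = ∑ g' : Γ, σ g' u) ∧
    (∀ y : K, (∀ g : Γ, σ g y = y) → ∃ u : K, (∑ g : Γ, σ g u) = y) ∧
    (∀ u : K, (∑ g : Γ, σ g u) = 0 ↔
      u ∈ Submodule.span ℂ {x : K | ∃ (h : Γ) (w : K), x = σ h w - w}) ∧
    (∀ u v : K, (∑ g : Γ, σ g (∑ h : Γ, ⁅σ h u, v⁆))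
      = ⁅∑ g : Γ, σ g u, ∑ g : Γ, σ g v⁆) :=
  averaging_map_induces_iso_coinvariants_to_invariants_general σ hmul hbr
end

section
/- Let Γ be a finite group acting on a Lie algebra K by automorphisms. Then the map ψ(u) = Σ_{g∈Γ} g·u satisfies ψ([u,v]_Γ) = [ψ(u), ψ(v)] for all u, v ∈ K, where [u,v]_Γ = Σ_{g∈Γ}[g·u, v]. -/
open scoped BigOperators

private lemma mySum_lie {K : Type*} [LieRing K] {ι : Type*} (s : Finset ι)
    (f : ι → K) (w : K) : ∑ i ∈ s, ⁅f i, w⁆ = ⁅∑ i ∈ s, f i, w⁆ := by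
  induction s using Finset.cons_induction with
  | empty => simp
  | cons a s ha ih => simp [Finset.sum_cons, ih, add_lie]

private lemma myLie_sum {K : Type*} [LieRing K] {ι : Type*} (s : Finset ι)
    (f : ι → K) (w : K) : ∑ i ∈ s, ⁅w, f i⁆ = ⁅w, ∑ i ∈ s, f i⁆ := by
  induction s using Finset.cons_induction with
  | empty => simp
  | cons a s ha ih => simp [Finset.sum_cons, ih, lie_add]

/-- For a finite group `Γ` acting on a Lie algebra `K` by automorphisms,
the averaging map `ψ(u) = ∑_{g∈Γ} g·u` satisfies `ψ([u,v]_Γ) = [ψ(u), ψ(v)]`,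
where `[u,v]_Γ = ∑_{g∈Γ}[g·u, v]`. -/
theorem averaging_map_bracket_compat
    {K : Type*} [LieRing K] [LieAlgebra ℂ K]
    {Γ : Type*} [Group Γ] [Fintype Γ] (σ : Γ → K →ₗ[ℂ] K)
    (hone : σ 1 = LinearMap.id)
    (hmul : ∀ g h : Γ, σ (g * h) = (σ g).comp (σ h))
    (hbr : ∀ (g : Γ) (u v : K), σ g ⁅u, v⁆ = ⁅σ g u, σ g v⁆) :
    ∀ u v : K, (∑ g : Γ, σ g (∑ h : Γ, ⁅σ h u, v⁆))
      = ⁅∑ g : Γ, σ g u, ∑ g : Γ, σ g v⁆ := by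
  intro u v
  have key : ∀ g : Γ, σ g (∑ h : Γ, ⁅σ h u, v⁆) = ⁅∑ h : Γ, σ h u, σ g v⁆ := by
    intro g
    rw [map_sum]
    have h1 : ∀ h : Γ, σ g ⁅σ h u, v⁆ = ⁅σ (g * h) u, σ g v⁆ := by
      intro h
      rw [hbr, hmul]; rfl
    rw [Finset.sum_congr rfl (fun h _ => h1 h), mySum_lie]
    congr 1
    exact Fintype.sum_equiv (Equiv.mulLeft g) _ _ (fun h => rfl)
  rw [Finset.sum_congr rfl (fun g _ => key g), myLie_sum]
end

section
/- Let 𝔤, ⟨·,·⟩, Γ, φ be as above, with the additional finiteness hypothesis: for any a, b ∈ 𝔤, [g·a, b] = 0 and ⟨g·a, b⟩ = 0 for all but finitely many g ∈ Γ. Then for the Γ-action on ĝ defined by g·(a⊗tᵐ) = φ(g)ᵐ(g·a ⊗ tᵐ), g·k = k, the pair (ĝ, Γ) satisfies: for any x, y ∈ ĝ, [g·x, y] = 0 for all but finitely many g ∈ Γ. Consequently the bracket [x,y]_Γ = Σ_{g∈Γ}[g·x, y] is well-defined on ĝ and descends to a Lie algebra structure on the quotient ĝ[Γ] of ĝ by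 span{g·x − x : g ∈ Γ, x ∈ ĝ}. -/
open scoped BigOperators

/-- The affine Lie algebra bracket on `ĝ = (𝔤 ⊗ ℂ[t,t⁻¹]) ⊕ ℂk`, modelled on
`(ℤ →₀ 𝔤) × ℂ`. -/
noncomputable def affBrF {α : Type*} [AddCommGroup α] [Module ℂ α]
    (br : α → α → α) (Bf : α → α → ℂ)
    (x y : (ℤ →₀ α) × ℂ) : (ℤ →₀ α) × ℂ :=
  (∑ m ∈ x.1.support, ∑ n ∈ y.1.support, Finsupp.single (m + n) (br (x.1 m) (y.1 n)),
   ∑ m ∈ x.1.support, (m : ℂ) * Bf (x.1 m) (y.1 (-m)))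

/-- The twisted action `g·(a⊗tᵐ + βk) = cᵐ(ρ a ⊗ tᵐ) + βk` on `ĝ`. -/
noncomputable def affActF {α : Type*} [AddCommGroup α] [Module ℂ α]
    (ρ : α →ₗ[ℂ] α) (c : ℂˣ) (x : (ℤ →₀ α) × ℂ) : (ℤ →₀ α) × ℂ :=
  (x.1.sum fun m v => Finsupp.single m (((c ^ m : ℂˣ) : ℂ) • ρ v), x.2)

/-!
Bilinearity reduces the finiteness condition on `ĝ` to monomials `a ⊗ tᵐ`, `b ⊗ tⁿ`, where
`[g·(a ⊗ tᵐ), b ⊗ tⁿ] = φ(g)ᵐ ([g·a, b] ⊗ tᵐ⁺ⁿ + m δₘ₊ₙ,₀ ⟨g·a, b⟩ k)` vanishes as soon as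
`[g·a, b]` and `⟨g·a, b⟩` do.

Everything else holds for any antisymmetric, `Γ`-equivariant bracket `T` satisfying the Jacobi
identity for which `g ↦ T (g·x) y` has finite support. Reindexing the sum over `Γ` by a
translation gives `[g·x, y]_Γ = [x, y]_Γ` and `g·[x, y]_Γ = [x, g·y]_Γ`, so the generators
`g·x - x` of the kernel of `ĝ → ĝ[Γ]` are killed on the left and mapped into the kernel on the
right; equivariance turns `T (g·y) x` into `-g·T (g⁻¹·x) y`, which gives antisymmetry modulo the
kernel; and after the same reindexing the Jacobi identity for `[·,·]_Γ` is a double sum over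
`Γ × Γ` of Jacobi identities for `T`.
-/

open Function

namespace Representation

variable {R V Γ : Type*} [CommRing R] [AddCommGroup V] [Module R V] [Group Γ]
  (ρ : Representation R Γ V) (T : V →ₗ[R] V →ₗ[R] V)

-- `[x, y]_Γ`; beware that `∑ᶠ` is `0` on functions of infinite support.
noncomputable def twistedBracket (x y : V) : V := ∑ᶠ g, T (ρ g x) y

variable {ρ T}

lemma twistedBracket_map_left (g : Γ) (x y : V) :
    twistedBracket ρ T (ρ g x) y = twistedBracket ρ T x y := by
  simpa [twistedBracket, map_mul] using
    finsum_comp_equiv (Equiv.mulRight g) (f := fun h => T (ρ h x) y)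

lemma map_twistedBracket (hequiv : ∀ g u v, T (ρ g u) (ρ g v) = ρ g (T u v))
    (hfin : ∀ x y, HasFiniteSupport fun g : Γ => T (ρ g x) y) (g : Γ) (x y : V) :
    ρ g (twistedBracket ρ T x y) = twistedBracket ρ T x (ρ g y) := by
  rw [twistedBracket, twistedBracket, map_finsum _ (hfin x y)]
  simpa [← hequiv, map_mul] using
    finsum_comp_equiv (Equiv.mulLeft g) (f := fun h => T (ρ h x) (ρ g y))

variable (hfin : ∀ x y, HasFiniteSupport fun g : Γ => T (ρ g x) y)
include hfin

lemma twistedBracket_sub_left (x x' y : V) :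
    twistedBracket ρ T (x - x') y = twistedBracket ρ T x y - twistedBracket ρ T x' y := by
  simp only [twistedBracket, map_sub, LinearMap.sub_apply]
  exact finsum_sub_distrib (hfin x y) (hfin x' y)

lemma twistedBracket_sub_right (x y y' : V) :
    twistedBracket ρ T x (y - y') = twistedBracket ρ T x y - twistedBracket ρ T x y' := by
  simp only [twistedBracket, map_sub]
  exact finsum_sub_distrib (hfin x y) (hfin x y')

lemma twistedBracket_sub_map_left_eq_zero (g : Γ) (x y : V) :
    twistedBracket ρ T (ρ g x - x) y = 0 := by
  rw [twistedBracket_sub_left hfin, twistedBracket_map_left, sub_self]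

lemma hasFiniteSupport_uncurry_bracket_bracket (x y z : V) :
    HasFiniteSupport (uncurry fun g h : Γ => T (ρ g x) (T (ρ h y) z)) := by
  refine ((hfin y z).biUnion fun h _ =>
    (hfin x (T (ρ h y) z)).prod (Set.finite_singleton h)).subset ?_
  rintro ⟨g, h⟩ hgh
  have hh : T (ρ h y) z ≠ 0 := fun h0 => hgh (by simp [h0])
  exact Set.mem_biUnion hh ⟨hgh, rfl⟩

variable (hequiv : ∀ g u v, T (ρ g u) (ρ g v) = ρ g (T u v))
include hequiv

lemma twistedBracket_sub_map_right_mem_ker (g : Γ) (x y : V) :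
    twistedBracket ρ T x (ρ g y - y) ∈ Coinvariants.ker ρ := by
  rw [twistedBracket_sub_right hfin, ← map_twistedBracket hequiv hfin]
  exact Coinvariants.sub_mem_ker g _

lemma twistedBracket_add_swap_mem_ker (hanti : ∀ u v, T u v = -T v u) (x y : V) :
    twistedBracket ρ T x y + twistedBracket ρ T y x ∈ Coinvariants.ker ρ := by
  have hswap : twistedBracket ρ T y x = ∑ᶠ g, -ρ g⁻¹ (T (ρ g x) y) := by
    rw [twistedBracket, ← finsum_comp_equiv (Equiv.inv Γ)]
    refine finsum_congr fun g => ?_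
    rw [Equiv.inv_apply, hanti, ← hequiv, inv_self_apply]
  have hfin' : HasFiniteSupport fun g => -ρ g⁻¹ (T (ρ g x) y) :=
    (hfin x y).subset <| support_subset_iff'.2 fun g hg => by simp [notMem_support.1 hg]
  rw [hswap, twistedBracket, ← finsum_add_distrib (hfin x y) hfin']
  refine finsum_induction (· ∈ Coinvariants.ker ρ) (Submodule.zero_mem _)
    (fun _ _ => Submodule.add_mem _) fun g => ?_
  rw [← sub_eq_add_neg, ← neg_sub, neg_mem_iff]
  exact Coinvariants.sub_mem_ker _ _

lemma twistedBracket_jacobi (hjacobi : ∀ u v w, T (T u v) w = T u (T v w) - T v (T u w))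
    (x y z : V) :
    twistedBracket ρ T x (twistedBracket ρ T y z) - twistedBracket ρ T y (twistedBracket ρ T x z)
      - twistedBracket ρ T (twistedBracket ρ T x y) z = 0 := by
  let A : Γ × Γ → V := fun p => T (ρ p.1 x) (T (ρ p.2 y) z)
  let C : Γ × Γ → V := fun p => T (ρ p.1 y) (T (ρ p.2 x) z)
  have hA : HasFiniteSupport A := hasFiniteSupport_uncurry_bracket_bracket hfin x y z
  have hC : HasFiniteSupport C := hasFiniteSupport_uncurry_bracket_bracket hfin y x z
  have hA' : twistedBracket ρ T x (twistedBracket ρ T y z) = ∑ᶠ p, A p := by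
    rw [finsum_curry _ hA]
    exact finsum_congr fun g => map_finsum _ (hfin y z)
  have hC' : twistedBracket ρ T y (twistedBracket ρ T x z) = ∑ᶠ p, C p := by
    rw [finsum_curry _ hC]
    exact finsum_congr fun g => map_finsum _ (hfin x z)
  have hAC : twistedBracket ρ T (twistedBracket ρ T x y) z = ∑ᶠ p, A p - ∑ᶠ p, C p := by
    have hA_swap : HasFiniteSupport fun p : Γ × Γ => A p.swap :=
      hA.fun_comp_of_injective Prod.swap_injective
    rw [← finsum_comp_equiv (Equiv.prodComm Γ Γ) (f := A), Equiv.coe_prodComm,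
      ← finsum_sub_distrib hA_swap hC, finsum_curry (fun p => A p.swap - C p) (hA_swap.sub hC)]
    refine finsum_congr fun g => ?_
    rw [map_twistedBracket hequiv hfin, twistedBracket]
    exact (map_finsum (T.flip z) (hfin x (ρ g y))).trans (finsum_congr fun h => hjacobi _ _ _)
  rw [hA', hC', hAC, sub_self]

end Representation

lemma Finsupp.induction_linear_prod {ι M R : Type*} [AddCommMonoid M] [AddCommMonoid R]
    {p : (ι →₀ M) × R → Prop} (u : (ι →₀ M) × R) (zero_fst : ∀ r : R, p (0, r))
    (single : ∀ i m, p (Finsupp.single i m, 0)) (add : ∀ u v, p u → p v → p (u + v)) : p u := by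
  rw [← Prod.fst_add_snd u]
  refine add _ _ ?_ (by simpa using zero_fst u.2)
  induction u.1 using Finsupp.induction_linear with
  | zero => simpa using zero_fst 0
  | add f g hf hg => simpa using add _ _ hf hg
  | single i m => simpa using single i m

namespace AffineLieAlgebra

section Twist

variable {M : Type*} [AddCommGroup M] [Module ℂ M]

noncomputable def twist (ρ : Module.End ℂ M) (c : ℂˣ) : Module.End ℂ ((ℤ →₀ M) × ℂ) :=
  (Finsupp.lsum ℂ fun m => Finsupp.lsingle m ∘ₗ (((c ^ m : ℂˣ) : ℂ) • ρ)).prodMap LinearMap.id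

lemma affActF_eq_twist (ρ : Module.End ℂ M) (c : ℂˣ) (x : (ℤ →₀ M) × ℂ) :
    affActF ρ c x = twist ρ c x :=
  rfl

@[simp]
lemma twist_single (ρ : Module.End ℂ M) (c : ℂˣ) (m : ℤ) (a : M) (α : ℂ) :
    twist ρ c (Finsupp.single m a, α) = (Finsupp.single m (((c ^ m : ℂˣ) : ℂ) • ρ a), α) := by
  simp [twist]

@[simp]
lemma twist_zero_fst (ρ : Module.End ℂ M) (c : ℂˣ) (α : ℂ) : twist ρ c (0, α) = (0, α) := by
  simp [twist]

noncomputable def twistRep {Γ : Type*} [Group Γ] (σ : Representation ℂ Γ M) (φ : Γ →* ℂˣ) :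
    Representation ℂ Γ ((ℤ →₀ M) × ℂ) where
  toFun g := twist (σ g) (φ g)
  map_one' := by ext <;> simp
  map_mul' g h := by ext <;> simp [mul_zpow, mul_smul]

end Twist

section Bracket

variable {𝔤 : Type*} [LieRing 𝔤] [LieAlgebra ℂ 𝔤] (B : 𝔤 →ₗ[ℂ] 𝔤 →ₗ[ℂ] ℂ)

noncomputable def monomialBracket (m n : ℤ) : 𝔤 →ₗ[ℂ] 𝔤 →ₗ[ℂ] (ℤ →₀ 𝔤) × ℂ :=
  LinearMap.mk₂ ℂ
    (fun a b => (Finsupp.single (m + n) ⁅a, b⁆, if m + n = 0 then (m : ℂ) * B a b else 0))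
    (fun a a' b => by split_ifs <;> simp [add_lie, mul_add])
    (fun c a b => by split_ifs <;> simp [smul_lie, mul_left_comm])
    (fun a b b' => by split_ifs <;> simp [lie_add, mul_add])
    (fun c a b => by split_ifs <;> simp [lie_smul, mul_left_comm])

noncomputable def bracket : ((ℤ →₀ 𝔤) × ℂ) →ₗ[ℂ] ((ℤ →₀ 𝔤) × ℂ) →ₗ[ℂ] (ℤ →₀ 𝔤) × ℂ :=
  (Finsupp.lsum ℂ fun m => (Finsupp.lsum ℂ fun n => (monomialBracket B m n).flip).flip).compl₁₂
    (LinearMap.fst ℂ _ ℂ) (LinearMap.fst ℂ _ ℂ)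

@[simp]
lemma bracket_single_single (m n : ℤ) (a b : 𝔤) (α β : ℂ) :
    bracket B (Finsupp.single m a, α) (Finsupp.single n b, β) =
      (Finsupp.single (m + n) ⁅a, b⁆, if m + n = 0 then (m : ℂ) * B a b else 0) := by
  simp [bracket, monomialBracket]

@[simp]
lemma bracket_zero_fst_left (β : ℂ) (v : (ℤ →₀ 𝔤) × ℂ) : bracket B (0, β) v = 0 := by
  simp [bracket]

@[simp]
lemma bracket_zero_fst_right (β : ℂ) (u : (ℤ →₀ 𝔤) × ℂ) : bracket B u (0, β) = 0 := by
  simp [bracket]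

lemma affBrF_eq_bracket (x y : (ℤ →₀ 𝔤) × ℂ) :
    affBrF (fun a b => ⁅a, b⁆) (fun a b => B a b) x y = bracket B x y := by
  simp [affBrF, bracket, monomialBracket, Finsupp.sum, Prod.ext_iff, Prod.fst_sum, Prod.snd_sum,
    add_eq_zero_iff_eq_neg']
  refine Finset.sum_congr rfl fun m _ => ?_
  split_ifs with h
  · rfl
  · simp [Finsupp.notMem_support_iff.1 h]

lemma bracket_anticomm (hsym : ∀ a b, B a b = B b a) (u v : (ℤ →₀ 𝔤) × ℂ) :
    bracket B u v = -bracket B v u := by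
  have hflip : (bracket B).flip = -bracket B := by
    ext m a n b <;> simp
    · rw [add_comm n m, ← lie_skew, Finsupp.single_neg, Finsupp.neg_apply]
    · rw [add_comm n m]
      split_ifs with h
      · obtain rfl : n = -m := by omega
        simp [hsym b a]
      · rw [neg_zero]
  simpa using LinearMap.congr_fun₂ hflip v u

lemma bracket_bracket (hinv : ∀ a b c, B ⁅a, b⁆ c = B a ⁅b, c⁆) (u v w : (ℤ →₀ 𝔤) × ℂ) :
    bracket B (bracket B u v) w = bracket B u (bracket B v w) - bracket B v (bracket B u w) := by
  induction u using Finsupp.induction_linear_prod with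
  | zero_fst => simp
  | add u u' hu hu' => simp only [map_add, LinearMap.add_apply, hu, hu']; abel
  | single m a =>
    induction v using Finsupp.induction_linear_prod with
    | zero_fst => simp
    | add v v' hv hv' => simp only [map_add, LinearMap.add_apply, hv, hv']; abel
    | single n b =>
      induction w using Finsupp.induction_linear_prod with
      | zero_fst => simp
      | add w w' hw hw' => simp only [map_add, hw, hw']; abel
      | single p c =>
        have hba : B b ⁅a, c⁆ = -B a ⁅b, c⁆ := by
          rw [← hinv, ← lie_skew, map_neg, LinearMap.neg_apply, hinv]
        simp [hinv, hba, ← add_assoc, add_comm n m]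
        split_ifs <;> ring

lemma bracket_twist (ρ : Module.End ℂ 𝔤) (c : ℂˣ) (hbr : ∀ a b, ρ ⁅a, b⁆ = ⁅ρ a, ρ b⁆)
    (hpres : ∀ a b, B (ρ a) (ρ b) = B a b) (u v : (ℤ →₀ 𝔤) × ℂ) :
    bracket B (twist ρ c u) (twist ρ c v) = twist ρ c (bracket B u v) := by
  induction u using Finsupp.induction_linear_prod with
  | zero_fst => simp
  | add u u' hu hu' => simp only [map_add, LinearMap.add_apply, hu, hu']
  | single m a =>
    induction v using Finsupp.induction_linear_prod with
    | zero_fst => simp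
    | add v v' hv hv' => simp only [map_add, hv, hv']
    | single n b =>
      simp only [twist_single, bracket_single_single, hbr, hpres, smul_lie, lie_smul, smul_smul,
        map_smul, LinearMap.smul_apply, smul_eq_mul, ← mul_assoc, ← Units.val_mul, ← zpow_add,
        add_comm n m]
      split_ifs with h <;> simp [h]

lemma hasFiniteSupport_bracket_twist {Γ : Type*} (σ : Γ → Module.End ℂ 𝔤) (φ : Γ → ℂˣ)
    (hfin : ∀ a b, {g | ⁅σ g a, b⁆ ≠ 0 ∨ B (σ g a) b ≠ 0}.Finite) (u v : (ℤ →₀ 𝔤) × ℂ) :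
    HasFiniteSupport fun g => bracket B (twist (σ g) (φ g) u) v := by
  induction u using Finsupp.induction_linear_prod with
  | zero_fst => simp [HasFiniteSupport]
  | add u u' hu hu' => simpa only [map_add, LinearMap.add_apply] using hu.fun_add hu'
  | single m a =>
    induction v using Finsupp.induction_linear_prod with
    | zero_fst => simp [HasFiniteSupport]
    | add v v' hv hv' => simpa only [map_add] using hv.fun_add hv'
    | single n b =>
      refine (hfin a b).subset (support_subset_iff'.2 fun g hg => ?_)
      simp only [Set.mem_ofPred_eq, not_or, not_not] at hg
      simp [smul_lie, hg.1, hg.2]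

end Bracket

end AffineLieAlgebra

open AffineLieAlgebra Representation

/-- under the finiteness hypotheses on `𝔤`, the pair `(ĝ, Γ)` satisfies
the finiteness condition `[g·x, y] = 0` for all but finitely many `g`, so the averaged
bracket `[x,y]_Γ = ∑ᶠ g, [g·x, y]` is well defined; it kills the generators
`g·x − x` on the left, maps into their span on the right, is antisymmetric modulo that
span, and satisfies the Jacobi identity — hence it descends to a Lie algebra structure
on the quotient `ĝ[Γ]`. -/
theorem generalized_twisted_affine_lie_algebra
    {𝔤 : Type*} [LieRing 𝔤] [LieAlgebra ℂ 𝔤]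
    {Γ : Type*} [Group Γ] (σ : Γ → 𝔤 →ₗ[ℂ] 𝔤) (φ : Γ →* ℂˣ)
    (B : 𝔤 →ₗ[ℂ] 𝔤 →ₗ[ℂ] ℂ)
    (hone : σ 1 = LinearMap.id)
    (hmul : ∀ g h : Γ, σ (g * h) = (σ g).comp (σ h))
    (hbr : ∀ (g : Γ) (a b : 𝔤), σ g ⁅a, b⁆ = ⁅σ g a, σ g b⁆)
    (hsym : ∀ a b : 𝔤, B a b = B b a)
    (hinv : ∀ a b c : 𝔤, B ⁅a, b⁆ c = B a ⁅b, c⁆)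
    (hpres : ∀ (g : Γ) (a b : 𝔤), B (σ g a) (σ g b) = B a b)
    (hfin : ∀ a b : 𝔤, {g : Γ | ⁅σ g a, b⁆ ≠ 0 ∨ B (σ g a) b ≠ 0}.Finite) :
    (∀ x y : (ℤ →₀ 𝔤) × ℂ,
        {g : Γ | affBrF (fun a b => ⁅a, b⁆) (fun a b => B a b)
          (affActF (σ g) (φ g) x) y ≠ 0}.Finite) ∧
    (∀ (g : Γ) (x y : (ℤ →₀ 𝔤) × ℂ),
        (∑ᶠ h : Γ, affBrF (fun a b => ⁅a, b⁆) (fun a b => B a b)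
          (affActF (σ h) (φ h) (affActF (σ g) (φ g) x - x)) y) = 0) ∧
    (∀ (g : Γ) (x y : (ℤ →₀ 𝔤) × ℂ),
        (∑ᶠ h : Γ, affBrF (fun a b => ⁅a, b⁆) (fun a b => B a b)
            (affActF (σ h) (φ h) x) (affActF (σ g) (φ g) y - y))
          ∈ Submodule.span ℂ
              {z : (ℤ →₀ 𝔤) × ℂ | ∃ (g' : Γ) (w : (ℤ →₀ 𝔤) × ℂ),
                z = affActF (σ g') (φ g') w - w}) ∧
    (∀ x y : (ℤ →₀ 𝔤) × ℂ,
        (∑ᶠ g : Γ, affBrF (fun a b => ⁅a, b⁆) (fun a b => B a b)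
            (affActF (σ g) (φ g) x) y)
          + (∑ᶠ g : Γ, affBrF (fun a b => ⁅a, b⁆) (fun a b => B a b)
              (affActF (σ g) (φ g) y) x)
          ∈ Submodule.span ℂ
              {z : (ℤ →₀ 𝔤) × ℂ | ∃ (g' : Γ) (w : (ℤ →₀ 𝔤) × ℂ),
                z = affActF (σ g') (φ g') w - w}) ∧
    (∀ x y z : (ℤ →₀ 𝔤) × ℂ,
        (∑ᶠ g : Γ, affBrF (fun a b => ⁅a, b⁆) (fun a b => B a b) (affActF (σ g) (φ g) x)
            (∑ᶠ h : Γ, affBrF (fun a b => ⁅a, b⁆) (fun a b => B a b)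
              (affActF (σ h) (φ h) y) z))
          - (∑ᶠ g : Γ, affBrF (fun a b => ⁅a, b⁆) (fun a b => B a b) (affActF (σ g) (φ g) y)
              (∑ᶠ h : Γ, affBrF (fun a b => ⁅a, b⁆) (fun a b => B a b)
                (affActF (σ h) (φ h) x) z))
          - (∑ᶠ g : Γ, affBrF (fun a b => ⁅a, b⁆) (fun a b => B a b)
              (affActF (σ g) (φ g)
                (∑ᶠ h : Γ, affBrF (fun a b => ⁅a, b⁆) (fun a b => B a b)
                  (affActF (σ h) (φ h) x) y)) z) = 0) := by
  let σ' : Representation ℂ Γ 𝔤 := { toFun := σ, map_one' := hone, map_mul' := hmul }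
  let ρ := twistRep σ' φ
  have hact : ∀ g x, affActF (σ g) (φ g) x = ρ g x := fun _ _ => rfl
  have hequiv : ∀ g u v, bracket B (ρ g u) (ρ g v) = ρ g (bracket B u v) := fun g =>
    bracket_twist B (σ g) (φ g) (hbr g) (hpres g)
  have hfin' : ∀ x y, HasFiniteSupport fun g => bracket B (ρ g x) y :=
    hasFiniteSupport_bracket_twist B σ (φ ·) hfin
  have hker : Submodule.span ℂ {z | ∃ (g : Γ) (w : (ℤ →₀ 𝔤) × ℂ), z = ρ g w - w} =
      Coinvariants.ker ρ := by
    simp only [Coinvariants.ker, Set.range, Prod.exists, eq_comm (a := _ - _)]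
  simp only [hact, affBrF_eq_bracket, hker]
  exact ⟨hfin', twistedBracket_sub_map_left_eq_zero hfin',
    twistedBracket_sub_map_right_mem_ker hfin' hequiv,
    twistedBracket_add_swap_mem_ker hfin' hequiv (bracket_anticomm B hsym),
    twistedBracket_jacobi hfin' hequiv (bracket_bracket B hinv)⟩
end

section
/- Let W be a vector space and let a(x), b(x) ∈ Hom(W, W((x))) be mutually local: (x₁−x₂)^k a(x₁)b(x₂) = (x₁−x₂)^k b(x₂)a(x₁) for some nonnegative integer k. Then the formal series p(x₁,x₂) a(x₁) b(x₂) with p(x₁,x₂)=(x₁−x₂)^k lies in Hom(W, W((x₁,x₂))), i.e., for each w ∈ W, (x₁−x₂)^k a(x₁)b(x₂)w involves only finitely many negative powers of x₁ and of x₂. -/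
open scoped BigOperators

/-- Let `a(x), b(x) ∈ Hom(W, W((x)))` (given by coefficient operators
`a n`, `b n` of `xⁿ`, lower-truncated on each vector) be mutually local:
`(x₁−x₂)^k a(x₁)b(x₂) = (x₁−x₂)^k b(x₂)a(x₁)`. Then
`(x₁−x₂)^k a(x₁)b(x₂) ∈ Hom(W, W((x₁,x₂)))`: for each `w`, there is a uniform lower
bound `N` such that the coefficient of `x₁^m x₂^n` applied to `w` vanishes whenever
`m < N` or `n < N`. -/
theorem local_product_is_jointly_truncated
    {W : Type*} [AddCommGroup W] [Module ℂ W]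
    (a b : ℤ → W →ₗ[ℂ] W) (k : ℕ)
    (htrunca : ∀ w : W, ∃ N : ℤ, ∀ n < N, a n w = 0)
    (htruncb : ∀ w : W, ∃ N : ℤ, ∀ n < N, b n w = 0)
    (hloc : ∀ (m n : ℤ) (w : W),
        (∑ i ∈ Finset.range (k + 1),
            ((-1 : ℂ) ^ i * (k.choose i : ℂ)) •
              a (m - ((k : ℤ) - (i : ℤ))) (b (n - (i : ℤ)) w))
          = ∑ i ∈ Finset.range (k + 1),
              ((-1 : ℂ) ^ i * (k.choose i : ℂ)) •
                b (n - (i : ℤ)) (a (m - ((k : ℤ) - (i : ℤ))) w)) :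
    ∀ w : W, ∃ N : ℤ, ∀ m n : ℤ, (m < N ∨ n < N) →
      (∑ i ∈ Finset.range (k + 1),
          ((-1 : ℂ) ^ i * (k.choose i : ℂ)) •
            a (m - ((k : ℤ) - (i : ℤ))) (b (n - (i : ℤ)) w)) = 0 := by
  intro w
  obtain ⟨Na, ha⟩ := htrunca w
  obtain ⟨Nb, hb⟩ := htruncb w
  refine ⟨min Na Nb, fun m n h => ?_⟩
  rcases h with h | h
  · rw [hloc]
    apply Finset.sum_eq_zero
    intro i hi
    have hik : i ≤ k := Nat.lt_succ_iff.mp (Finset.mem_range.mp hi)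
    have : m - ((k : ℤ) - (i : ℤ)) < Na := by
      have := lt_min_iff.mp h
      omega
    rw [ha _ this, map_zero, smul_zero]
  · apply Finset.sum_eq_zero
    intro i hi
    have : n - (i : ℤ) < Nb := by
      have := lt_min_iff.mp h
      omega
    rw [hb _ this, map_zero, smul_zero]
end

section
/- Let 𝔤 be a Lie algebra with symmetric invariant bilinear form, Γ ⊆ Aut(𝔤,⟨·,·⟩) with the finiteness conditions, φ: Γ → ℂˣ a group homomorphism, and H = ker φ. Then the generalized twisted affine Lie algebra ĝ[Γ] (the quotient of ĝ by span{φ(g)ᵐ(g·a⊗tᵐ) − a⊗tᵐ} with bracket [a⊗tᵐ, b⊗tⁿ]_Γ = Σ_{g∈Γ} φ(g)ᵐ([g·a,b]⊗t^{m+n} + m⟨g·a,b⟩δ_{m+n,0}k)) is isomorphic as a Lie algebra to the algebra (𝔤/H)̂[Γ/H] constructed from the quotient Lie algebra 𝔤/H (with bracket [u,v]_H = Σ_{h∈H}[h·u,v] and form ⟨u,v⟩_H = Σ_{h∈H}⟨h·u,v⟩) and the induced injective homomorphism Γ/H → ℂˣ. -/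
open scoped BigOperators

/-!
The natural map `ĝ → (𝔤/H)̂`, `a ⊗ tᵐ ↦ (a + J) ⊗ tᵐ`, is surjective and intertwines the action
of `g ∈ Γ` with that of `gH ∈ Γ/H`; its kernel `J ⊗ ℂ[t, t⁻¹]` is spanned by the vectors
`h·x − x` with `h ∈ H`, because `φ` is trivial on `H` and so the twist `φ(h)ᵐ` disappears.
Hence the map descends to an isomorphism of the coinvariant quotients.

For the brackets, split the sum over `Γ` along the cosets `H g₀`. As `h g₀` acts on `x` as
`h` acting on `g₀·x`, the inner sum over `H` only averages the coefficients of `g₀·x`, and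
averaging the bracket and the form of `𝔤` over `H` is exactly the bracket and form of `𝔤/H`.
All sums are finite: by the finiteness condition only finitely many group elements pair
nontrivially with the finitely many coefficients of `x` and `y`.
-/

open Function Submodule

section Quotients

variable {R M N : Type*} [Ring R] [AddCommGroup M] [Module R M] [AddCommGroup N] [Module R N]

noncomputable def LinearMap.quotientEquivOfKerLE (F : M →ₗ[R] N) (hF : Surjective F)
    (P : Submodule R M) (hP : LinearMap.ker F ≤ P) : (M ⧸ P) ≃ₗ[R] N ⧸ P.map F :=
  (P.quotEquivOfEq _ <| by
      rw [LinearMap.ker_comp, ker_mkQ, comap_map_eq, sup_of_le_left hP]).trans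
    (((P.map F).mkQ ∘ₗ F).quotKerEquivOfSurjective ((P.map F).mkQ_surjective.comp hF))

abbrev coinvariantsKer (R : Type*) {ι M : Type*} [Ring R] [AddCommGroup M] [Module R M]
    (A : ι → M → M) : Submodule R M :=
  span R {z | ∃ i w, z = A i w - w}

lemma map_coinvariantsKer {ι κ : Type*} (F : M →ₗ[R] N) (hF : Surjective F)
    (π : ι → κ) (hπ : Surjective π) (A : ι → M → M) (A' : κ → N → N)
    (hA : ∀ i w, F (A i w) = A' (π i) (F w)) :
    (coinvariantsKer R A).map F = coinvariantsKer R A' := by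
  rw [coinvariantsKer, map_span]
  congr 1
  ext z
  constructor
  · rintro ⟨_, ⟨i, w, rfl⟩, rfl⟩
    exact ⟨π i, F w, by rw [map_sub, hA]⟩
  · rintro ⟨q, v, rfl⟩
    obtain ⟨i, rfl⟩ := hπ q
    obtain ⟨w, rfl⟩ := hF v
    exact ⟨A i w - w, ⟨i, w, rfl⟩, by rw [map_sub, hA]⟩

end Quotients

section Cosets

variable {G : Type*} [Group G] (K : Subgroup G) [K.Normal]

noncomputable def QuotientGroup.prodSubgroupEquiv : (G ⧸ K) × K ≃ G where
  toFun p := p.2 * p.1.out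
  invFun g := (g, ⟨g * (g : G ⧸ K).out⁻¹,
    ‹K.Normal›.mem_comm (QuotientGroup.eq.mp (QuotientGroup.out_eq' (g : G ⧸ K)))⟩)
  left_inv := by
    rintro ⟨q, h⟩
    have hq : ((h * q.out : G) : G ⧸ K) = q := by
      rw [QuotientGroup.mk_mul, (QuotientGroup.eq_one_iff _).mpr h.2, one_mul,
        QuotientGroup.out_eq']
    ext
    · exact hq
    · simp [hq]
  right_inv g := inv_mul_cancel_right _ _

lemma finsum_eq_finsum_quotient_finsum {M : Type*} [AddCommMonoid M] {f : G → M}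
    (hf : HasFiniteSupport f) :
    ∑ᶠ g, f g = ∑ᶠ (q : G ⧸ K) (h : K), f (h * q.out) := by
  rw [← finsum_comp_equiv (QuotientGroup.prodSubgroupEquiv K),
    finsum_curry _ (hf.preimage (QuotientGroup.prodSubgroupEquiv K).injective.injOn)]
  rfl

end Cosets

section Affine

variable {α β : Type*} [AddCommGroup α] [Module ℂ α] [AddCommGroup β] [Module ℂ β]

noncomputable def affMap (π : α →ₗ[ℂ] β) : ((ℤ →₀ α) × ℂ) →ₗ[ℂ] (ℤ →₀ β) × ℂ :=
  (Finsupp.mapRange.linearMap π).prodMap LinearMap.id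

lemma affMap_apply (π : α →ₗ[ℂ] β) (x : (ℤ →₀ α) × ℂ) :
    affMap π x = (x.1.mapRange π (map_zero π), x.2) :=
  rfl

lemma affMap_surjective {π : α →ₗ[ℂ] β} (hπ : Surjective π) : Surjective (affMap π) :=
  (Finsupp.mapRange_surjective π (map_zero π) hπ).prodMap surjective_id

lemma ker_affMap (π : α →ₗ[ℂ] β) :
    LinearMap.ker (affMap π) = (⨆ m, (LinearMap.ker π).map (Finsupp.lsingle m)).prod ⊥ := by
  rw [affMap, LinearMap.ker_prodMap, Finsupp.ker_mapRange, Finsupp.submodule_eq_iSup,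
    LinearMap.ker_id]

lemma affActF_fst_apply (ρ : α →ₗ[ℂ] α) (c : ℂˣ) (x : (ℤ →₀ α) × ℂ) (m : ℤ) :
    (affActF ρ c x).1 m = ((c ^ m : ℂˣ) : ℂ) • ρ (x.1 m) := by
  rw [affActF, Finsupp.sum_apply, Finsupp.sum, Finset.sum_eq_single m]
  · rw [Finsupp.single_eq_same]
  · exact fun _ _ hne => Finsupp.single_eq_of_ne' hne
  · intro hm
    rw [Finsupp.notMem_support_iff.mp hm, map_zero, smul_zero, Finsupp.single_zero,
      Finsupp.zero_apply]

lemma affActF_fst_support_subset (ρ : α →ₗ[ℂ] α) (c : ℂˣ) (x : (ℤ →₀ α) × ℂ) :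
    (affActF ρ c x).1.support ⊆ x.1.support := by
  intro m
  simp only [Finsupp.mem_support_iff, affActF_fst_apply]
  exact fun h hx => h (by rw [hx, map_zero, smul_zero])

lemma affActF_single (ρ : α →ₗ[ℂ] α) (c : ℂˣ) (m : ℤ) (u : α) (t : ℂ) :
    affActF ρ c (Finsupp.single m u, t) = (Finsupp.single m (((c ^ m : ℂˣ) : ℂ) • ρ u), t) := by
  refine Prod.ext ?_ rfl
  ext n
  rw [affActF_fst_apply]
  rcases eq_or_ne m n with rfl | hmn
  · simp
  · simp [Finsupp.single_eq_of_ne' hmn]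

lemma affActF_affActF (ρ ρ' : α →ₗ[ℂ] α) (c c' : ℂˣ) (x : (ℤ →₀ α) × ℂ) :
    affActF ρ c (affActF ρ' c' x) = affActF (ρ ∘ₗ ρ') (c * c') x := by
  refine Prod.ext ?_ rfl
  ext m
  simp only [affActF_fst_apply, map_smul, smul_smul, mul_zpow, Units.val_mul, LinearMap.comp_apply]

lemma affMap_affActF {π : α →ₗ[ℂ] β} {ρ : α →ₗ[ℂ] α} {ρ' : β →ₗ[ℂ] β}
    (h : ∀ u, ρ' (π u) = π (ρ u)) (c : ℂˣ) (x : (ℤ →₀ α) × ℂ) :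
    affMap π (affActF ρ c x) = affActF ρ' c (affMap π x) := by
  refine Prod.ext ?_ rfl
  ext m
  simp [affMap_apply, affActF_fst_apply, h]

lemma ker_affMap_mkQ_le {Γ : Type*} (ρ : Γ → α →ₗ[ℂ] α) (c : Γ → ℂˣ) {J : Submodule ℂ α}
    (hJ : J ≤ span ℂ {v | ∃ h, c h = 1 ∧ ∃ u, v = ρ h u - u}) :
    LinearMap.ker (affMap J.mkQ) ≤ coinvariantsKer ℂ fun g => affActF (ρ g) (c g) := by
  rw [ker_affMap, ker_mkQ]
  rintro ⟨z, t⟩ ⟨hz, rfl : t = 0⟩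
  suffices h : ⨆ m, J.map (Finsupp.lsingle m) ≤
      (coinvariantsKer ℂ fun g => affActF (ρ g) (c g)).comap (LinearMap.inl ℂ _ ℂ) from h hz
  refine iSup_le fun m => map_le_iff_le_comap.mpr (hJ.trans (span_le.mpr ?_))
  rintro _ ⟨h, hh, u, rfl⟩
  refine subset_span ⟨h, (Finsupp.single m u, 0), ?_⟩
  simp [affActF_single, hh, Finsupp.single_sub]

lemma affBrF_eq_sum_of_subset (br : α → α → α) (Bf : α → α → ℂ)
    (hbr0 : ∀ a, br a 0 = 0) (h0br : ∀ b, br 0 b = 0) (h0B : ∀ b, Bf 0 b = 0)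
    (x y : (ℤ →₀ α) × ℂ) {sx sy : Finset ℤ}
    (hx : x.1.support ⊆ sx) (hy : y.1.support ⊆ sy) :
    affBrF br Bf x y =
      (∑ m ∈ sx, ∑ n ∈ sy, Finsupp.single (m + n) (br (x.1 m) (y.1 n)),
       ∑ m ∈ sx, (m : ℂ) * Bf (x.1 m) (y.1 (-m))) := by
  refine Prod.ext ?_ ?_
  · refine (Finset.sum_subset hx fun m _ hm => Finset.sum_eq_zero fun n _ => ?_).trans
      (Finset.sum_congr rfl fun m _ => Finset.sum_subset hy fun n _ hn => ?_)
    · rw [Finsupp.notMem_support_iff.mp hm, h0br, Finsupp.single_zero]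
    · rw [Finsupp.notMem_support_iff.mp hn, hbr0, Finsupp.single_zero]
  · exact Finset.sum_subset hx fun m _ hm => by
      rw [Finsupp.notMem_support_iff.mp hm, h0B, mul_zero]

end Affine

section Averaging

variable {𝔤 : Type*} [LieRing 𝔤] [LieAlgebra ℂ 𝔤] (B : 𝔤 →ₗ[ℂ] 𝔤 →ₗ[ℂ] ℂ)

lemma affBrF_affActF_eq_zero {ρ : 𝔤 →ₗ[ℂ] 𝔤} (c : ℂˣ) {x y : (ℤ →₀ 𝔤) × ℂ}
    (h : ∀ a ∈ Set.range x.1, ∀ b ∈ Set.range y.1, ⁅ρ a, b⁆ = 0 ∧ B (ρ a) b = 0) :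
    affBrF (fun a b => ⁅a, b⁆) (fun a b => B a b) (affActF ρ c x) y = 0 := by
  refine Prod.ext (Finset.sum_eq_zero fun m _ => Finset.sum_eq_zero fun n _ => ?_)
    (Finset.sum_eq_zero fun m _ => ?_) <;> dsimp only
  · rw [affActF_fst_apply, smul_lie, (h _ ⟨m, rfl⟩ _ ⟨n, rfl⟩).1, smul_zero, Finsupp.single_zero]
  · rw [affActF_fst_apply, map_smul, LinearMap.smul_apply, (h _ ⟨m, rfl⟩ _ ⟨-m, rfl⟩).2,
      smul_zero, mul_zero]

variable {ι : Type*} {ρ : ι → 𝔤 →ₗ[ℂ] 𝔤}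

lemma exists_finset_forall_lie_eq_zero
    (hfin : ∀ a b : 𝔤, {i | ⁅ρ i a, b⁆ ≠ 0 ∨ B (ρ i a) b ≠ 0}.Finite)
    {A C : Set 𝔤} (hA : A.Finite) (hC : C.Finite) :
    ∃ T : Finset ι, ∀ i ∉ T, ∀ a ∈ A, ∀ b ∈ C, ⁅ρ i a, b⁆ = 0 ∧ B (ρ i a) b = 0 := by
  have hU := (hA.prod hC).biUnion fun p _ => hfin p.1 p.2
  refine ⟨hU.toFinset, fun i hi a ha b hb => ?_⟩
  simp only [Set.Finite.mem_toFinset, Set.mem_iUnion, not_exists] at hi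
  simpa using hi (a, b) ⟨ha, hb⟩

lemma hasFiniteSupport_affBrF_affActF
    (hfin : ∀ a b : 𝔤, {i | ⁅ρ i a, b⁆ ≠ 0 ∨ B (ρ i a) b ≠ 0}.Finite)
    (c : ι → ℂˣ) (x y : (ℤ →₀ 𝔤) × ℂ) :
    HasFiniteSupport fun i =>
      affBrF (fun a b => ⁅a, b⁆) (fun a b => B a b) (affActF (ρ i) (c i) x) y := by
  obtain ⟨T, hT⟩ := exists_finset_forall_lie_eq_zero B hfin x.1.finite_range y.1.finite_range
  exact T.finite_toSet.subset fun i hi => by_contra fun hiT =>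
    hi (affBrF_affActF_eq_zero B (c i) (hT i hiT))

lemma finsum_affMap_affBrF_affActF_one
    (hfin : ∀ a b : 𝔤, {i | ⁅ρ i a, b⁆ ≠ 0 ∨ B (ρ i a) b ≠ 0}.Finite)
    {β : Type*} [AddCommGroup β] [Module ℂ β]
    {π : 𝔤 →ₗ[ℂ] β} (hπ : Surjective π) {br : β → β → β} {Bf : β → β → ℂ}
    (hbr : ∀ a b, br (π a) (π b) = π (∑ᶠ i, ⁅ρ i a, b⁆))
    (hB : ∀ a b, Bf (π a) (π b) = ∑ᶠ i, B (ρ i a) b) (x y : (ℤ →₀ 𝔤) × ℂ) :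
    ∑ᶠ i, affMap π (affBrF (fun a b => ⁅a, b⁆) (fun a b => B a b) (affActF (ρ i) 1 x) y) =
      affBrF br Bf (affMap π x) (affMap π y) := by
  obtain ⟨T, hT⟩ := exists_finset_forall_lie_eq_zero B hfin x.1.finite_range y.1.finite_range
  have hbrT : ∀ m n, br (π (x.1 m)) (π (y.1 n)) = ∑ i ∈ T, π ⁅ρ i (x.1 m), y.1 n⁆ := fun m n => by
    rw [hbr, finsum_eq_sum_of_support_subset _ fun i hi => by_contra fun hiT =>
      hi (hT i hiT _ ⟨m, rfl⟩ _ ⟨n, rfl⟩).1, map_sum]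
  have hBT : ∀ m n, Bf (π (x.1 m)) (π (y.1 n)) = ∑ i ∈ T, B (ρ i (x.1 m)) (y.1 n) := fun m n => by
    rw [hB, finsum_eq_sum_of_support_subset _ fun i hi => by_contra fun hiT =>
      hi (hT i hiT _ ⟨m, rfl⟩ _ ⟨n, rfl⟩).2]
  have hbr0 : ∀ u, br u 0 = 0 := fun u => by obtain ⟨a, rfl⟩ := hπ u; simpa using hbr a 0
  have h0br : ∀ u, br 0 u = 0 := fun u => by obtain ⟨b, rfl⟩ := hπ u; simpa using hbr 0 b
  have h0B : ∀ u, Bf 0 u = 0 := fun u => by obtain ⟨b, rfl⟩ := hπ u; simpa using hB 0 b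
  have hsupp : ∀ z : (ℤ →₀ 𝔤) × ℂ, (affMap π z).1.support ⊆ z.1.support := fun z =>
    Finsupp.support_mapRange (hf := map_zero π)
  rw [finsum_eq_sum_of_support_subset (s := T) _ fun i hi => by_contra fun hiT => hi (by
    rw [affBrF_affActF_eq_zero B 1 (hT i hiT), map_zero]),
    affBrF_eq_sum_of_subset br Bf hbr0 h0br h0B _ _ (hsupp x) (hsupp y)]
  simp_rw [affBrF_eq_sum_of_subset (fun a b => ⁅a, b⁆) (fun a b => B a b) lie_zero zero_lie
    (fun b => by simp) _ y (affActF_fst_support_subset _ _ x) subset_rfl]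
  refine Prod.ext ?_ ?_
  · simp only [affActF_fst_apply, one_zpow, Units.val_one, one_smul, affMap_apply, Prod.fst_sum,
      Finsupp.mapRange_finsetSum, Finsupp.mapRange_single, Finsupp.mapRange_apply, hbrT,
      Finsupp.single_finsetSum]
    rw [Finset.sum_comm]
    exact Finset.sum_congr rfl fun m _ => Finset.sum_comm
  · simp only [affActF_fst_apply, one_zpow, Units.val_one, one_smul, affMap_apply, Prod.snd_sum,
      Finsupp.mapRange_apply, hBT, Finset.mul_sum]
    exact Finset.sum_comm

end Averaging

theorem generalized_twisted_affine_iso_quotient_construction_general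
    {𝔤 : Type*} [LieRing 𝔤] [LieAlgebra ℂ 𝔤]
    {Γ : Type*} [Group Γ] (σ : Γ → 𝔤 →ₗ[ℂ] 𝔤) (φ : Γ →* ℂˣ)
    (B : 𝔤 →ₗ[ℂ] 𝔤 →ₗ[ℂ] ℂ)
    (hmul : ∀ g h : Γ, σ (g * h) = (σ g).comp (σ h))
    (hfin : ∀ a b : 𝔤, {g : Γ | ⁅σ g a, b⁆ ≠ 0 ∨ B (σ g a) b ≠ 0}.Finite)
    -- the subspace of 𝔤 spanned by h·u − u for h ∈ H = ker φ
    (J : Submodule ℂ 𝔤)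
    (hJ : J = Submodule.span ℂ {x : 𝔤 | ∃ h : Γ, φ h = 1 ∧ ∃ u : 𝔤, x = σ h u - u})
    -- the induced action of Γ/H on 𝔤/H
    (σbar : (Γ ⧸ φ.ker) → (𝔤 ⧸ J) →ₗ[ℂ] (𝔤 ⧸ J))
    (hσbar : ∀ (g : Γ) (u : 𝔤),
        σbar (QuotientGroup.mk g) (J.mkQ u) = J.mkQ (σ g u))
    -- the averaged bracket and form of 𝔤/H
    (brbar : (𝔤 ⧸ J) → (𝔤 ⧸ J) → (𝔤 ⧸ J))
    (hbrbar : ∀ u v : 𝔤,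
        brbar (J.mkQ u) (J.mkQ v) = J.mkQ (∑ᶠ h : φ.ker, ⁅σ (h : Γ) u, v⁆))
    (Bbar : (𝔤 ⧸ J) → (𝔤 ⧸ J) → ℂ)
    (hBbar : ∀ u v : 𝔤,
        Bbar (J.mkQ u) (J.mkQ v) = ∑ᶠ h : φ.ker, B (σ (h : Γ) u) v) :
    ∃ e : (((ℤ →₀ 𝔤) × ℂ) ⧸ Submodule.span ℂ
            {z : (ℤ →₀ 𝔤) × ℂ | ∃ (g : Γ) (w : (ℤ →₀ 𝔤) × ℂ),
              z = affActF (σ g) (φ g) w - w})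
          ≃ₗ[ℂ]
          (((ℤ →₀ (𝔤 ⧸ J)) × ℂ) ⧸ Submodule.span ℂ
            {z : (ℤ →₀ (𝔤 ⧸ J)) × ℂ | ∃ (q : Γ ⧸ φ.ker) (w : (ℤ →₀ (𝔤 ⧸ J)) × ℂ),
              z = affActF (σbar q) (QuotientGroup.kerLift φ q) w - w}),
      (∀ x : (ℤ →₀ 𝔤) × ℂ,
          e (Submodule.Quotient.mk x)
            = Submodule.Quotient.mk
                (x.1.mapRange (⇑J.mkQ) (map_zero J.mkQ), x.2)) ∧
      (∀ x y : (ℤ →₀ 𝔤) × ℂ,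
          e (Submodule.Quotient.mk
              (∑ᶠ g : Γ, affBrF (fun a b => ⁅a, b⁆) (fun a b => B a b)
                (affActF (σ g) (φ g) x) y))
            = Submodule.Quotient.mk
                (∑ᶠ q : Γ ⧸ φ.ker, affBrF brbar Bbar
                  (affActF (σbar q) (QuotientGroup.kerLift φ q)
                    (x.1.mapRange (⇑J.mkQ) (map_zero J.mkQ), x.2))
                  (y.1.mapRange (⇑J.mkQ) (map_zero J.mkQ), y.2))) := by
  set F := affMap J.mkQ
  have hF : Surjective F := affMap_surjective J.mkQ_surjective
  have hFσ : ∀ g w, F (affActF (σ g) (φ g) w) =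
      affActF (σbar g) (QuotientGroup.kerLift φ g) (F w) := fun g =>
    affMap_affActF (hσbar g) (φ g)
  have hspan := map_coinvariantsKer F hF _ QuotientGroup.mk_surjective
    (fun g => affActF (σ g) (φ g)) (fun q => affActF (σbar q) (QuotientGroup.kerLift φ q)) hFσ
  let e := (F.quotientEquivOfKerLE hF _ (ker_affMap_mkQ_le σ φ hJ.le)).trans
    (quotEquivOfEq _ _ hspan)
  have he : ∀ x, e (Submodule.Quotient.mk x) = Submodule.Quotient.mk (F x) := fun _ => rfl
  refine ⟨e, he, fun x y => ?_⟩
  have hfinH : ∀ a b : 𝔤, {h : φ.ker | ⁅σ h a, b⁆ ≠ 0 ∨ B (σ h a) b ≠ 0}.Finite := fun a b =>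
    (hfin a b).preimage Subtype.val_injective.injOn
  rw [he, map_finsum F (hasFiniteSupport_affBrF_affActF B hfin _ x y)]
  congr 1
  rw [finsum_eq_finsum_quotient_finsum φ.ker
    ((hasFiniteSupport_affBrF_affActF B hfin _ x y).fun_comp (map_zero F))]
  refine finsum_congr fun q => ?_
  have hcoset : ∀ h : φ.ker, affActF (σ (h * q.out)) (φ (h * q.out)) x =
      affActF (σ h) 1 (affActF (σ q.out) (φ q.out) x) := fun h => by
    rw [affActF_affActF, ← hmul, ← h.2, ← map_mul]
  simp only [hcoset]
  rw [finsum_affMap_affBrF_affActF_one B hfinH J.mkQ_surjective hbrbar hBbar, hFσ,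
    QuotientGroup.out_eq']
  rfl

/-- `ĝ[Γ] ≅ (𝔤/H)̂[Γ/H]` where `H = ker φ`.  Here `ĝ[Γ]` is the quotient
of `ĝ` by the span of `g·x − x` (with the averaged bracket
`[x,y]_Γ = ∑ᶠ g, [g·x, y]`), `𝔤/H` is the quotient Lie algebra with bracket
`[u,v]_H = ∑_{h∈H}[h·u,v]` and form `⟨u,v⟩_H = ∑_{h∈H}⟨h·u,v⟩`, and `Γ/H` acts on it
with the induced injective homomorphism `Γ/H → ℂˣ`.  The natural map is a linear
isomorphism of the two quotients intertwining the averaged brackets. -/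
theorem generalized_twisted_affine_iso_quotient_construction
    {𝔤 : Type*} [LieRing 𝔤] [LieAlgebra ℂ 𝔤]
    {Γ : Type*} [Group Γ] (σ : Γ → 𝔤 →ₗ[ℂ] 𝔤) (φ : Γ →* ℂˣ)
    (B : 𝔤 →ₗ[ℂ] 𝔤 →ₗ[ℂ] ℂ)
    (hone : σ 1 = LinearMap.id)
    (hmul : ∀ g h : Γ, σ (g * h) = (σ g).comp (σ h))
    (hbr : ∀ (g : Γ) (a b : 𝔤), σ g ⁅a, b⁆ = ⁅σ g a, σ g b⁆)
    (hsym : ∀ a b : 𝔤, B a b = B b a)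
    (hinv : ∀ a b c : 𝔤, B ⁅a, b⁆ c = B a ⁅b, c⁆)
    (hpres : ∀ (g : Γ) (a b : 𝔤), B (σ g a) (σ g b) = B a b)
    (hfin : ∀ a b : 𝔤, {g : Γ | ⁅σ g a, b⁆ ≠ 0 ∨ B (σ g a) b ≠ 0}.Finite)
    -- the subspace of 𝔤 spanned by h·u − u for h ∈ H = ker φ
    (J : Submodule ℂ 𝔤)
    (hJ : J = Submodule.span ℂ {x : 𝔤 | ∃ h : Γ, φ h = 1 ∧ ∃ u : 𝔤, x = σ h u - u})
    -- the induced action of Γ/H on 𝔤/H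
    (σbar : (Γ ⧸ φ.ker) → (𝔤 ⧸ J) →ₗ[ℂ] (𝔤 ⧸ J))
    (hσbar : ∀ (g : Γ) (u : 𝔤),
        σbar (QuotientGroup.mk g) (J.mkQ u) = J.mkQ (σ g u))
    -- the averaged bracket and form of 𝔤/H
    (brbar : (𝔤 ⧸ J) → (𝔤 ⧸ J) → (𝔤 ⧸ J))
    (hbrbar : ∀ u v : 𝔤,
        brbar (J.mkQ u) (J.mkQ v) = J.mkQ (∑ᶠ h : φ.ker, ⁅σ (h : Γ) u, v⁆))
    (Bbar : (𝔤 ⧸ J) → (𝔤 ⧸ J) → ℂ)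
    (hBbar : ∀ u v : 𝔤,
        Bbar (J.mkQ u) (J.mkQ v) = ∑ᶠ h : φ.ker, B (σ (h : Γ) u) v) :
    ∃ e : (((ℤ →₀ 𝔤) × ℂ) ⧸ Submodule.span ℂ
            {z : (ℤ →₀ 𝔤) × ℂ | ∃ (g : Γ) (w : (ℤ →₀ 𝔤) × ℂ),
              z = affActF (σ g) (φ g) w - w})
          ≃ₗ[ℂ]
          (((ℤ →₀ (𝔤 ⧸ J)) × ℂ) ⧸ Submodule.span ℂ
            {z : (ℤ →₀ (𝔤 ⧸ J)) × ℂ | ∃ (q : Γ ⧸ φ.ker) (w : (ℤ →₀ (𝔤 ⧸ J)) × ℂ),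
              z = affActF (σbar q) (QuotientGroup.kerLift φ q) w - w}),
      (∀ x : (ℤ →₀ 𝔤) × ℂ,
          e (Submodule.Quotient.mk x)
            = Submodule.Quotient.mk
                (x.1.mapRange (⇑J.mkQ) (map_zero J.mkQ), x.2)) ∧
      (∀ x y : (ℤ →₀ 𝔤) × ℂ,
          e (Submodule.Quotient.mk
              (∑ᶠ g : Γ, affBrF (fun a b => ⁅a, b⁆) (fun a b => B a b)
                (affActF (σ g) (φ g) x) y))
            = Submodule.Quotient.mk
                (∑ᶠ q : Γ ⧸ φ.ker, affBrF brbar Bbar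
                  (affActF (σbar q) (QuotientGroup.kerLift φ q)
                    (x.1.mapRange (⇑J.mkQ) (map_zero J.mkQ), x.2))
                  (y.1.mapRange (⇑J.mkQ) (map_zero J.mkQ), y.2))) :=
  generalized_twisted_affine_iso_quotient_construction_general σ φ B hmul hfin J hJ σbar hσbar brbar
    hbrbar Bbar hBbar
end
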